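/- Let g₁ : {0,1}^n → {-1,1} be the symmetric function with g₁(x) = -1 if and only if |x| = 1. Then for every nonempty S ⊆ [n], the Fourier coefficient of g₁ satisfies g₁^(S) = -2(n - 2|S|)/2^n. -/
import Mathlib

open Finset

noncomputable def fhat {n : ℕ} (f : (Fin n → ZMod 2) → ℝ) (S : Finset (Fin n)) : ℝ :=
  (∑ x : Fin n → ZMod 2, f x * (-1 : ℝ) ^ (∑ i ∈ S, (x i).val)) / 2 ^ n

lemma zval1 : ∀ a : ZMod 2, a.val = 1 → a = 1 := by decide
lemma zval0 : ∀ a : ZMod 2, a.val = 0 → a = 0 := by decide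
lemma zvle : ∀ a : ZMod 2, a.val ≤ 1 := by decide

lemma chi_zero {n : ℕ} (S : Finset (Fin n)) (hS : S ≠ ∅) :
    ∑ x : Fin n → ZMod 2, (-1 : ℝ) ^ (∑ i ∈ S, (x i).val) = 0 := by
  have h1 : ∀ x : Fin n → ZMod 2, (-1 : ℝ) ^ (∑ i ∈ S, (x i).val)
      = ∏ i : Fin n, (if i ∈ S then (-1:ℝ)^(x i).val else 1) := by
    intro x
    rw [Finset.prod_ite_mem, Finset.univ_inter, Finset.prod_pow_eq_pow_sum]
  simp_rw [h1]
  rw [← Fintype.piFinset_univ, ← Finset.prod_univ_sum (t := fun _ => (univ : Finset (ZMod 2))) (f := fun i b => if i ∈ S then (-1:ℝ)^b.val else 1)]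
  obtain ⟨j, hj⟩ := Finset.nonempty_iff_ne_empty.mpr hS
  apply Finset.prod_eq_zero (Finset.mem_univ j)
  simp only [hj, if_true]
  have : (Finset.univ : Finset (ZMod 2)) = {0, 1} := by decide
  rw [this]
  norm_num [ZMod.val_one]

lemma v1 : (1 : ZMod 2).val = 1 := by decide
lemma v0 : (0 : ZMod 2).val = 0 := rfl

lemma wt_e {n : ℕ} (j : Fin n) :
    ∑ i, ((if i = j then (1:ZMod 2) else 0).val) = 1 := by
  simp [apply_ite ZMod.val, v1, v0, Finset.sum_ite_eq']

lemma exists_e {n : ℕ} (x : Fin n → ZMod 2) (h : ∑ i, (x i).val = 1) :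
    ∃ j, x = fun i => if i = j then (1:ZMod 2) else 0 := by
  have hne : ∑ i, (x i).val ≠ 0 := by omega
  obtain ⟨j, -, hj⟩ := Finset.exists_ne_zero_of_sum_ne_zero hne
  refine ⟨j, funext fun i => ?_⟩
  have hsplit : (x j).val + ∑ i ∈ Finset.univ.erase j, (x i).val = 1 := by
    rw [Finset.add_sum_erase _ (fun i => (x i).val) (Finset.mem_univ j)]; exact h
  have h1 : (x j).val = 1 := by
    have := zvle (x j); omega
  have h0 : ∀ i ∈ Finset.univ.erase j, (x i).val = 0 := by
    rw [← Finset.sum_eq_zero_iff]; omega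
  by_cases hij : i = j
  · subst hij; simp [zval1 _ h1]
  · have := h0 i (Finset.mem_erase.mpr ⟨hij, Finset.mem_univ i⟩)
    simp [hij, zval0 _ this]

theorem g_one_fourier {n : ℕ} (S : Finset (Fin n)) (hS : S ≠ ∅) :
    fhat (fun x : Fin n → ZMod 2 => if (∑ i, (x i).val) = 1 then (-1 : ℝ) else 1) S =
      -2 * ((n : ℝ) - 2 * S.card) / 2 ^ n := by
  unfold fhat
  congr 1
  have key : ∀ x : Fin n → ZMod 2,
      (if (∑ i, (x i).val) = 1 then (-1:ℝ) else 1) * (-1:ℝ)^(∑ i ∈ S, (x i).val)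
      = (-1:ℝ)^(∑ i ∈ S, (x i).val)
        - 2 * (if (∑ i, (x i).val) = 1 then (-1:ℝ)^(∑ i ∈ S, (x i).val) else 0) := by
    intro x; split <;> ring
  rw [Finset.sum_congr rfl fun x _ => key x, Finset.sum_sub_distrib, chi_zero S hS,
    ← Finset.mul_sum]
  have ind : ∀ x : Fin n → ZMod 2,
      (if (∑ i, (x i).val) = 1 then (-1:ℝ)^(∑ i ∈ S, (x i).val) else 0)
      = ∑ j : Fin n, (if x = (fun i => if i = j then (1:ZMod 2) else 0) then
          (-1:ℝ)^(∑ i ∈ S, (x i).val) else 0) := by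
    intro x
    by_cases h : (∑ i, (x i).val) = 1
    · obtain ⟨j, hj⟩ := exists_e x h
      rw [if_pos h]
      have hz : ∀ k ∈ (Finset.univ : Finset (Fin n)), k ≠ j →
          (if x = (fun i => if i = k then (1:ZMod 2) else 0) then
            (-1:ℝ)^(∑ i ∈ S, (x i).val) else 0) = 0 := by
        intro k _ hk
        rw [if_neg]
        intro hxk
        have h2 : (fun i => if i = j then (1:ZMod 2) else 0)
            = fun i => if i = k then (1:ZMod 2) else 0 := hj ▸ hxk
        have h3 := congrFun h2 j
        simp [Ne.symm hk] at h3
      rw [Finset.sum_eq_single_of_mem j (Finset.mem_univ j) hz, if_pos hj]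
    · rw [if_neg h, Finset.sum_eq_zero]
      intro k _
      rw [if_neg]
      intro hxk
      exact h (by rw [hxk]; exact wt_e k)
  rw [Finset.sum_congr rfl fun x _ => ind x, Finset.sum_comm]
  have inner : ∀ j : Fin n,
      (∑ x : Fin n → ZMod 2, if x = (fun i => if i = j then (1:ZMod 2) else 0) then
          (-1:ℝ)^(∑ i ∈ S, (x i).val) else 0)
      = (if j ∈ S then (-1:ℝ) else 1) := by
    intro j
    rw [Finset.sum_ite_eq' Finset.univ]
    simp only [Finset.mem_univ, if_true]
    have : (∑ i ∈ S, ((if i = j then (1:ZMod 2) else 0)).val) = if j ∈ S then 1 else 0 := by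
      simp [apply_ite ZMod.val, v1, v0, Finset.sum_ite_eq']
    rw [this]
    split <;> norm_num
  rw [Finset.sum_congr rfl fun j _ => inner j]
  rw [← Finset.sum_add_sum_compl S]
  rw [Finset.sum_congr rfl (fun j hj => if_pos hj),
    Finset.sum_congr rfl (fun j hj => if_neg (Finset.mem_compl.mp hj))]
  simp only [Finset.sum_const, Finset.card_compl, nsmul_eq_mul, Fintype.card_fin]
  have hle : S.card ≤ n := by simpa using Finset.card_le_univ S
  push_cast [hle]
  ring
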